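/- arXiv:2407.17134 — 8 statements merged into one kernel-verified Lean document; each statement's English description precedes it below -/
import Mathlib

section
/- In a left near-field (F, +, ·), the set 𝔡 of left distributive elements is closed under addition; consequently (𝔡, +, ·) is a division ring. -/
/-!
The heart is Neumann's theorem that `(F, +)` is abelian. The map `φ x = -1 * x` is an additive
involution, without nonzero fixed points when `1 + 1 ≠ 0`; hence `twist x = x - φ x` is injective.
Its values commute with `-1`, and on the centralizer of `-1` it is right multiplication by `1 + 1`,
so `twist x = twist (twist x * (1 + 1)⁻¹)` puts every `x` in that centralizer: `-1 * x = -x`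
(when `1 + 1 = 0` this holds because `x + x = x * (1 + 1) = 0`). Applying left distributivity to
`-1 * (-b + -a)` then gives `a + b = b + a`, after which closure of `𝔡` under addition is a
rearrangement of four terms.
-/

/-- A left near-field: `(F,+)` is a group, `(F \ {0}, ·)` is a group,
`0` is absorbing, and the left distributive law holds. -/
class LeftNearField (F : Type*) extends AddGroup F, Monoid F, Inv F where
  zero_mul : ∀ a : F, 0 * a = 0
  mul_zero : ∀ a : F, a * 0 = 0
  left_distrib : ∀ a b c : F, a * (b + c) = a * b + a * c
  mul_inv_cancel : ∀ a : F, a ≠ 0 → a * a⁻¹ = 1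
  inv_mul_cancel : ∀ a : F, a ≠ 0 → a⁻¹ * a = 1
  one_ne_zero : (1 : F) ≠ 0

/-- The set of left distributive elements of a left near-field. -/
def dstr (F : Type*) [LeftNearField F] : Set F :=
  {γ : F | ∀ α β : F, (α + β) * γ = α * γ + β * γ}

namespace LeftNearField

variable {F : Type*} [LeftNearField F]

theorem mul_neg (a b : F) : a * -b = -(a * b) := by
  refine eq_neg_of_add_eq_zero_right ?_
  rw [← left_distrib, add_neg_cancel, mul_zero]

theorem neg_one_mul_neg_one : (-1 : F) * -1 = 1 := by
  rw [mul_neg, mul_one, neg_neg]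

theorem neg_one_mul_neg_one_mul (x : F) : (-1 : F) * (-1 * x) = x := by
  rw [← mul_assoc, neg_one_mul_neg_one, one_mul]

theorem mul_add_one_add_one (x : F) : x * (1 + 1) = x + x := by
  rw [left_distrib, mul_one]

theorem commute_neg_one_iff (x : F) : Commute (-1) x ↔ -1 * x = -x := by
  rw [Commute, SemiconjBy, mul_neg, mul_one]

theorem commute_inv {a x : F} (hx : x ≠ 0) (h : Commute a x) : Commute a x⁻¹ :=
  h.units_inv_right (u := ⟨x, x⁻¹, mul_inv_cancel x hx, inv_mul_cancel x hx⟩)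

theorem eq_zero_of_neg_one_mul_eq_self (h2 : (1 : F) + 1 ≠ 0) {z : F} (hz : -1 * z = z) :
    z = 0 := by
  by_contra hz0
  have h : (-1 : F) = 1 :=
    calc (-1 : F) = -1 * (z * z⁻¹) := by rw [mul_inv_cancel z hz0, mul_one]
      _ = z * z⁻¹ := by rw [← mul_assoc, hz]
      _ = 1 := mul_inv_cancel z hz0
  exact h2 (by rw [← add_neg_cancel (1 : F), h])

def twist (x : F) : F := x + -(-1 * x)

theorem commute_neg_one_twist (x : F) : Commute (-1) (twist x) := by
  rw [commute_neg_one_iff, twist, left_distrib, mul_neg, neg_one_mul_neg_one_mul, neg_add_rev,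
    neg_neg]

theorem twist_of_commute {m : F} (hm : Commute (-1) m) : twist m = m * (1 + 1) := by
  rw [twist, (commute_neg_one_iff m).1 hm, neg_neg, mul_add_one_add_one]

theorem twist_injective (h2 : (1 : F) + 1 ≠ 0) : Function.Injective (twist : F → F) := by
  intro x y hxy
  have hfix : -1 * (-y + x) = -y + x := by
    rw [left_distrib, mul_neg]
    calc -(-1 * y) + -1 * x = -y + (y + -(-1 * y)) + -1 * x := by rw [neg_add_cancel_left]
      _ = -y + (x + -(-1 * x)) + -1 * x := by rw [← twist, ← twist, hxy]
      _ = -y + x := by rw [add_assoc, add_assoc, neg_add_cancel, add_zero]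
  exact neg_add_eq_zero.mp (eq_zero_of_neg_one_mul_eq_self h2 hfix) |>.symm

theorem commute_neg_one_of_add_one_ne_zero (h2 : (1 : F) + 1 ≠ 0) (x : F) : Commute (-1) x := by
  have h2' : Commute (-1 : F) (1 + 1) := by
    rw [commute_neg_one_iff, left_distrib, mul_one, neg_add_rev]
  set m := twist x * (1 + 1)⁻¹
  have hm : Commute (-1) m := (commute_neg_one_twist x).mul_right (commute_inv h2 h2')
  have hmx : twist m = twist x := by
    rw [twist_of_commute hm, mul_assoc, inv_mul_cancel _ h2, mul_one]
  rwa [← twist_injective h2 hmx]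

theorem neg_one_mul (x : F) : -1 * x = -x := by
  by_cases h2 : (1 : F) + 1 = 0
  · have h : (-1 : F) = 1 := neg_eq_of_add_eq_zero_right h2
    rw [h, one_mul, eq_comm, neg_eq_iff_add_eq_zero, ← mul_add_one_add_one, h2, mul_zero]
  · exact (commute_neg_one_iff x).1 (commute_neg_one_of_add_one_ne_zero h2 x)

theorem add_comm (a b : F) : a + b = b + a := by
  have h := left_distrib (-1 : F) (-b) (-a)
  rwa [neg_one_mul, neg_one_mul, neg_one_mul, neg_add_rev, neg_neg, neg_neg] at h

abbrev toAddCommGroup : AddCommGroup F := { ‹LeftNearField F› with add_comm }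

attribute [local instance] toAddCommGroup

theorem add_mem_dstr {a b : F} (ha : a ∈ dstr F) (hb : b ∈ dstr F) : a + b ∈ dstr F := by
  intro α β
  rw [left_distrib, left_distrib, left_distrib, ha, hb, add_add_add_comm]

theorem zero_mem_dstr : (0 : F) ∈ dstr F := by
  intro α β
  rw [mul_zero, mul_zero, mul_zero, add_zero]

theorem one_mem_dstr : (1 : F) ∈ dstr F := by
  intro α β
  rw [mul_one, mul_one, mul_one]

theorem neg_mem_dstr {a : F} (ha : a ∈ dstr F) : -a ∈ dstr F := by
  intro α β
  rw [mul_neg, mul_neg, mul_neg, ha, neg_add]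

theorem mul_mem_dstr {a b : F} (ha : a ∈ dstr F) (hb : b ∈ dstr F) : a * b ∈ dstr F := by
  intro α β
  rw [← mul_assoc, ha, hb, mul_assoc, mul_assoc]

theorem inv_mem_dstr {a : F} (ha : a ∈ dstr F) (ha0 : a ≠ 0) : a⁻¹ ∈ dstr F := by
  intro α β
  have cancel (x : F) : x * a⁻¹ * a = x := by rw [mul_assoc, inv_mul_cancel a ha0, mul_one]
  conv_lhs => rw [← cancel α, ← cancel β, ← ha, mul_assoc, mul_inv_cancel a ha0, mul_one]

end LeftNearField

/-- In a left near-field, the set `𝔡` of left distributive elements is closed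
under addition; consequently `(𝔡, +, ·)` is a division ring (it contains `0`
and `1`, is closed under negation, multiplication and inverses of nonzero
elements, its addition is commutative, and both distributive laws hold on it;
together with the ambient associativity and group axioms these are exactly the
division ring axioms for `𝔡`). -/
theorem stmt1 (F : Type*) [LeftNearField F] :
    (∀ a b : F, a ∈ dstr F → b ∈ dstr F → a + b ∈ dstr F) ∧
    ((0 : F) ∈ dstr F ∧ (1 : F) ∈ dstr F ∧
      (∀ a ∈ dstr F, -a ∈ dstr F) ∧
      (∀ a ∈ dstr F, ∀ b ∈ dstr F, a * b ∈ dstr F) ∧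
      (∀ a ∈ dstr F, a ≠ 0 → a⁻¹ ∈ dstr F) ∧
      (∀ a ∈ dstr F, ∀ b ∈ dstr F, a + b = b + a) ∧
      (∀ a b c : F, a ∈ dstr F → b ∈ dstr F → c ∈ dstr F →
        a * (b + c) = a * b + a * c ∧ (a + b) * c = a * c + b * c)) :=
  ⟨fun _ _ => LeftNearField.add_mem_dstr, LeftNearField.zero_mem_dstr,
    LeftNearField.one_mem_dstr, fun _ => LeftNearField.neg_mem_dstr,
    fun _ ha _ hb => LeftNearField.mul_mem_dstr ha hb, fun _ => LeftNearField.inv_mem_dstr,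
    fun a _ b _ => LeftNearField.add_comm a b,
    fun a b c _ _ hc => ⟨LeftNearField.left_distrib a b c, hc a b⟩⟩
end

section
/- Let V be a near-vector space over a scalar group F and let u be a nonzero element of the quasi-kernel Q(V). Then for every nonzero λ ∈ F and all α, β ∈ F, the induced additions satisfy α +_{λu} β = (αλ +_u βλ)λ⁻¹. -/
/-- A scalar group `(F, ·, 1, 0, -1)`: a monoid with an absorbing zero such that
`(F \ {0}, ·)` is a group and `{±1}` is the solution set of `x² = 1`. -/
class ScalarGroup (F : Type*) extends Monoid F, Zero F, Inv F where
  negOne : F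
  zero_mul : ∀ a : F, 0 * a = 0
  mul_zero : ∀ a : F, a * 0 = 0
  one_ne_zero : (1 : F) ≠ 0
  sq_iff : ∀ x : F, x * x = 1 ↔ x = 1 ∨ x = negOne
  mul_inv_cancel : ∀ a : F, a ≠ 0 → a * a⁻¹ = 1
  inv_mul_cancel : ∀ a : F, a ≠ 0 → a⁻¹ * a = 1

/-- A (left) near-vector space over a scalar group `F`: an additive abelian
group `V` with a free action of `F` by additive endomorphisms, such that the
quasi-kernel generates `V` as an additive group. -/
class NearVectorSpace (F V : Type*) [ScalarGroup F] [AddCommGroup V] extends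
    SMul F V where
  one_smul : ∀ v : V, (1 : F) • v = v
  mul_smul : ∀ (a b : F) (v : V), (a * b) • v = a • (b • v)
  smul_add : ∀ (a : F) (v w : V), a • (v + w) = a • v + a • w
  zero_smul : ∀ v : V, (0 : F) • v = 0
  free : ∀ (a b : F) (v : V), v ≠ 0 → a • v = b • v → a = b
  gen : AddSubgroup.closure {v : V | ∀ α β : F, ∃ γ : F, α • v + β • v = γ • v} = ⊤

/-- The quasi-kernel `Q(V)` of a near-vector space. -/
def quasiKernel (F V : Type*) [ScalarGroup F] [AddCommGroup V] [NearVectorSpace F V] :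
    Set V :=
  {v : V | ∀ α β : F, ∃ γ : F, α • v + β • v = γ • v}

/-- The distributive elements `𝔡_u` of the near-field `F_u = (F, +_u, ·)`, where
`p = +_u` is the addition induced by a nonzero quasi-kernel element `u`. -/
def dstrU {F : Type*} [ScalarGroup F] (p : F → F → F) : Set F :=
  {γ : F | ∀ α β : F, p α β * γ = p (α * γ) (β * γ)}

/-- `Q_u(V)`: the set of quasi-kernel elements whose induced addition is `p = +_u`
(together with `0`, which satisfies the condition trivially). -/
def QU (F V : Type*) [ScalarGroup F] [AddCommGroup V] [NearVectorSpace F V]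
    (p : F → F → F) : Set V :=
  {v : V | v ∈ quasiKernel F V ∧ ∀ α β : F, α • v + β • v = p α β • v}

/-- Iterated sum with respect to the addition `p = +_u` (whose neutral element is `0`). -/
def usum {F : Type*} [ScalarGroup F] (p : F → F → F) : List F → F
  | [] => 0
  | a :: l => p a (usum p l)

theorem ScalarGroup.inv_mul_cancel_right {F : Type*} [ScalarGroup F] (a : F) {b : F}
    (hb : b ≠ 0) : a * b⁻¹ * b = a := by
  rw [mul_assoc, ScalarGroup.inv_mul_cancel b hb, mul_one]

theorem NearVectorSpace.smul_ne_zero {F V : Type*} [ScalarGroup F] [AddCommGroup V]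
    [NearVectorSpace F V] {a : F} {v : V} (ha : a ≠ 0) (hv : v ≠ 0) : a • v ≠ 0 := by
  intro h
  exact ha (NearVectorSpace.free a 0 v hv (by rw [h, NearVectorSpace.zero_smul]))

theorem stmt2_general (F V : Type*) [ScalarGroup F] [AddCommGroup V] [NearVectorSpace F V]
    (u : V) (hu0 : u ≠ 0)
    (lam : F) (hlam : lam ≠ 0) (p q : F → F → F)
    (hp : ∀ α β : F, α • u + β • u = p α β • u)
    (hq : ∀ α β : F, α • (lam • u) + β • (lam • u) = q α β • (lam • u)) :
    ∀ α β : F, q α β = p (α * lam) (β * lam) * lam⁻¹ := by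
  intro α β
  apply NearVectorSpace.free _ _ _ (NearVectorSpace.smul_ne_zero hlam hu0)
  calc q α β • (lam • u) = α • (lam • u) + β • (lam • u) := (hq α β).symm
    _ = (α * lam) • u + (β * lam) • u := by
      rw [NearVectorSpace.mul_smul, NearVectorSpace.mul_smul]
    _ = p (α * lam) (β * lam) • u := hp _ _
    _ = (p (α * lam) (β * lam) * lam⁻¹) • (lam • u) := by
      rw [← NearVectorSpace.mul_smul, ScalarGroup.inv_mul_cancel_right _ hlam]

/-- For a nonzero quasi-kernel element `u` and nonzero `λ ∈ F`, the induced
additions satisfy `α +_{λu} β = (αλ +_u βλ)λ⁻¹`. -/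
theorem stmt2 (F V : Type*) [ScalarGroup F] [AddCommGroup V] [NearVectorSpace F V]
    (u : V) (hu : u ∈ quasiKernel F V) (hu0 : u ≠ 0)
    (lam : F) (hlam : lam ≠ 0) (p q : F → F → F)
    (hp : ∀ α β : F, α • u + β • u = p α β • u)
    (hq : ∀ α β : F, α • (lam • u) + β • (lam • u) = q α β • (lam • u)) :
    ∀ α β : F, q α β = p (α * lam) (β * lam) * lam⁻¹ :=
  stmt2_general F V u hu0 lam hlam p q hp hq
end

section
/- Let V be a near-vector space over a scalar group F, let u, v be nonzero elements of the quasi-kernel Q(V), and suppose +_u = +_v. Then +_{γu} = +_{γv} for all nonzero γ ∈ F. -/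
theorem ScalarGroup.mul_right_cancel_of_ne_zero {F : Type*} [ScalarGroup F] {γ a b : F}
    (hγ : γ ≠ 0) (h : a * γ = b * γ) : a = b := by
  simpa only [mul_assoc, ScalarGroup.mul_inv_cancel γ hγ, mul_one] using
    congrArg (· * γ⁻¹) h

namespace NearVectorSpace

variable {F V : Type*} [ScalarGroup F] [AddCommGroup V] [NearVectorSpace F V]

theorem induced_add_smul_mul_right {w : V} (hw : w ≠ 0) {p : F → F → F}
    (hpw : ∀ α β : F, α • w + β • w = p α β • w) (γ : F) {s : F → F → F}
    (hs : ∀ α β : F, α • (γ • w) + β • (γ • w) = s α β • (γ • w)) (α β : F) :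
    s α β * γ = p (α * γ) (β * γ) := by
  apply NearVectorSpace.free _ _ w hw
  calc (s α β * γ) • w = α • (γ • w) + β • (γ • w) := by rw [mul_smul, hs]
    _ = (α * γ) • w + (β * γ) • w := by rw [mul_smul, mul_smul]
    _ = p (α * γ) (β * γ) • w := hpw _ _

end NearVectorSpace

theorem stmt3_general (F V : Type*) [ScalarGroup F] [AddCommGroup V] [NearVectorSpace F V]
    (u v : V) (hu0 : u ≠ 0)
    (hv0 : v ≠ 0)
    (p : F → F → F)
    (hpu : ∀ α β : F, α • u + β • u = p α β • u)
    (hpv : ∀ α β : F, α • v + β • v = p α β • v)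
    (γ : F) (hγ : γ ≠ 0) (q r : F → F → F)
    (hq : ∀ α β : F, α • (γ • u) + β • (γ • u) = q α β • (γ • u))
    (hr : ∀ α β : F, α • (γ • v) + β • (γ • v) = r α β • (γ • v)) :
    q = r := by
  funext α β
  apply ScalarGroup.mul_right_cancel_of_ne_zero hγ
  rw [NearVectorSpace.induced_add_smul_mul_right hu0 hpu γ hq,
    NearVectorSpace.induced_add_smul_mul_right hv0 hpv γ hr]

/-- If `u, v` are nonzero quasi-kernel elements with `+_u = +_v`, then
`+_{γu} = +_{γv}` for every nonzero `γ ∈ F`. -/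
theorem stmt3 (F V : Type*) [ScalarGroup F] [AddCommGroup V] [NearVectorSpace F V]
    (u v : V) (hu : u ∈ quasiKernel F V) (hu0 : u ≠ 0)
    (hv : v ∈ quasiKernel F V) (hv0 : v ≠ 0)
    (p : F → F → F)
    (hpu : ∀ α β : F, α • u + β • u = p α β • u)
    (hpv : ∀ α β : F, α • v + β • v = p α β • v)
    (γ : F) (hγ : γ ≠ 0) (q r : F → F → F)
    (hq : ∀ α β : F, α • (γ • u) + β • (γ • u) = q α β • (γ • u))
    (hr : ∀ α β : F, α • (γ • v) + β • (γ • v) = r α β • (γ • v)) :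
    q = r :=
  stmt3_general F V u v hu0 hv0 p hpu hpv γ hγ q r hq hr
end

section
/- Let V be a near-vector space over a scalar group F, u a nonzero element of the quasi-kernel, and λ a nonzero element of F. Then the set of distributive elements of F_{λu} equals λ 𝔡_u λ⁻¹, where 𝔡_u is the set of distributive elements of F_u; i.e., 𝔡_{λu} = λ 𝔡_u λ⁻¹. -/
/-!
Comparing `(α +_{λu} β) • λu = (αλ +_u βλ) • u` and using freeness gives
`α +_{λu} β = (αλ +_u βλ) λ⁻¹`. Substituting `α ↦ αλ` in the distributivity identity of
`+_{λu}` and cancelling `λ⁻¹` on the right then shows that `γ` is distributive for `+_{λu}`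
exactly when `λ⁻¹ γ λ` is distributive for `+_u`.
-/

namespace ScalarGroup

variable {F : Type*} [ScalarGroup F]

def unitOfNeZero {a : F} (ha : a ≠ 0) : Fˣ :=
  ⟨a, a⁻¹, mul_inv_cancel a ha, inv_mul_cancel a ha⟩

lemma mem_dstrU_iff_of_eq_mul_units {p q : F → F → F} (c : Fˣ)
    (hq : ∀ α β, q α β = p (α * c) (β * c) * ↑c⁻¹) (γ : F) :
    γ ∈ dstrU q ↔ ↑c⁻¹ * γ * c ∈ dstrU p := by
  have hsurj : Function.Surjective (· * (c : F)) := fun α => ⟨α * ↑c⁻¹, by simp⟩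
  simp only [dstrU, Set.mem_ofPred_eq, hq]
  symm
  rw [hsurj.forall]
  refine forall_congr' fun α => ?_
  rw [hsurj.forall]
  refine forall_congr' fun β => ?_
  rw [Iff.comm, ← Units.mul_left_inj c]
  simp only [mul_assoc, Units.mul_inv_cancel_left, Units.inv_mul, mul_one]

lemma dstrU_eq_image_conj_of_eq_mul_units {p q : F → F → F} (c : Fˣ)
    (hq : ∀ α β, q α β = p (α * c) (β * c) * ↑c⁻¹) :
    dstrU q = (fun d : F => ↑c * d * ↑c⁻¹) '' dstrU p := by
  rw [Set.image_eq_preimage_of_inverse (g := fun γ : F => ↑c⁻¹ * γ * c)]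
  · ext γ
    exact mem_dstrU_iff_of_eq_mul_units c hq γ
  · intro d
    simp [mul_assoc]
  · intro γ
    simp [mul_assoc]

end ScalarGroup

namespace NearVectorSpace

variable {F V : Type*} [ScalarGroup F] [AddCommGroup V] [NearVectorSpace F V]

lemma smul_ne_zero_s7 {a : F} {v : V} (ha : a ≠ 0) (hv : v ≠ 0) : a • v ≠ 0 := fun h =>
  ha <| free a 0 v hv <| by rw [h, zero_smul]

lemma inducedAdd_smul {u : V} (hu0 : u ≠ 0) {lam : F} (hlam : lam ≠ 0) {p q : F → F → F}
    (hp : ∀ α β : F, α • u + β • u = p α β • u)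
    (hq : ∀ α β : F, α • (lam • u) + β • (lam • u) = q α β • (lam • u)) (α β : F) :
    q α β = p (α * lam) (β * lam) * lam⁻¹ := by
  apply free _ _ _ (smul_ne_zero_s7 hlam hu0)
  rw [← hq, ← mul_smul, ← mul_smul, ← mul_smul, mul_assoc, ScalarGroup.inv_mul_cancel lam hlam,
    mul_one, hp]

end NearVectorSpace

theorem stmt7_general (F V : Type*) [ScalarGroup F] [AddCommGroup V] [NearVectorSpace F V]
    (u : V) (hu0 : u ≠ 0)
    (lam : F) (hlam : lam ≠ 0)
    (p q : F → F → F)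
    (hp : ∀ α β : F, α • u + β • u = p α β • u)
    (hq : ∀ α β : F, α • (lam • u) + β • (lam • u) = q α β • (lam • u)) :
    dstrU q = (fun d => lam * d * lam⁻¹) '' dstrU p :=
  ScalarGroup.dstrU_eq_image_conj_of_eq_mul_units (ScalarGroup.unitOfNeZero hlam)
    (NearVectorSpace.inducedAdd_smul hu0 hlam hp hq)

/-- For a nonzero quasi-kernel element `u` and nonzero `λ ∈ F`, the distributive
elements of `F_{λu}` are exactly `λ 𝔡_u λ⁻¹`. -/
theorem stmt7 (F V : Type*) [ScalarGroup F] [AddCommGroup V] [NearVectorSpace F V]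
    (u : V) (hu : u ∈ quasiKernel F V) (hu0 : u ≠ 0)
    (lam : F) (hlam : lam ≠ 0)
    (p q : F → F → F)
    (hp : ∀ α β : F, α • u + β • u = p α β • u)
    (hq : ∀ α β : F, α • (lam • u) + β • (lam • u) = q α β • (lam • u)) :
    dstrU q = (fun d => lam * d * lam⁻¹) '' dstrU p :=
  stmt7_general F V u hu0 lam hlam p q hp hq
end

section
/- Let V be a near-vector space over a scalar group F and u a nonzero element of the quasi-kernel Q(V). Then Q_u(V) = {v ∈ Q(V)\{0} : +_v = +_u} ∪ {0} is closed under the addition of V and under scalar multiplication by elements of 𝔡_u, and forms a left vector space over the division ring 𝔡_u. -/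
namespace NearVectorSpace

variable {F V : Type*} [ScalarGroup F] [AddCommGroup V] [NearVectorSpace F V]

theorem smul_zero (a : F) : a • (0 : V) = 0 := by
  have h := smul_add a (0 : V) 0
  rw [zero_add] at h
  exact left_eq_add.mp h

theorem smul_neg (a : F) (v : V) : a • (-v) = -(a • v) := by
  refine eq_neg_of_add_eq_zero_right ?_
  rw [← smul_add, add_neg_cancel, smul_zero]

theorem mem_QU_of_forall {p : F → F → F} {v : V}
    (hv : ∀ α β : F, α • v + β • v = p α β • v) : v ∈ QU F V p :=
  ⟨fun α β => ⟨p α β, hv α β⟩, hv⟩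

theorem zero_mem_QU (p : F → F → F) : (0 : V) ∈ QU F V p :=
  mem_QU_of_forall fun α β => by simp only [smul_zero, add_zero]

theorem add_mem_QU {p : F → F → F} {v w : V} (hv : v ∈ QU F V p) (hw : w ∈ QU F V p) :
    v + w ∈ QU F V p :=
  mem_QU_of_forall fun α β => by
    rw [smul_add, smul_add, smul_add, ← hv.2, ← hw.2]
    abel

theorem neg_mem_QU {p : F → F → F} {v : V} (hv : v ∈ QU F V p) : -v ∈ QU F V p :=
  mem_QU_of_forall fun α β => by rw [smul_neg, smul_neg, smul_neg, ← neg_add, hv.2]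

theorem smul_mem_QU {p : F → F → F} {d : F} (hd : d ∈ dstrU p) {v : V} (hv : v ∈ QU F V p) :
    d • v ∈ QU F V p :=
  mem_QU_of_forall fun α β => by rw [← mul_smul, ← mul_smul, ← mul_smul, hd α β, hv.2]

section InducedAddition

variable {u : V} {p : F → F → F}

theorem mul_addU_smul (hp : ∀ α β : F, α • u + β • u = p α β • u) (a d e : F) :
    (a * p d e) • u = (a * d) • u + (a * e) • u := by
  rw [mul_smul, ← hp, smul_add, ← mul_smul, ← mul_smul]

-- By freeness of the action, an identity in `F` may be checked on the nonzero vector `u`.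
theorem addU_mem_dstrU (hp : ∀ α β : F, α • u + β • u = p α β • u) (hu0 : u ≠ 0) {d e : F}
    (hd : d ∈ dstrU p) (he : e ∈ dstrU p) : p d e ∈ dstrU p := by
  intro α β
  apply free _ _ u hu0
  calc (p α β * p d e) • u
      = (p α β * d) • u + (p α β * e) • u := mul_addU_smul hp _ _ _
    _ = ((α * d) • u + (β * d) • u) + ((α * e) • u + (β * e) • u) := by
        rw [hd α β, he α β, hp (α * d), hp (α * e)]
    _ = ((α * d) • u + (α * e) • u) + ((β * d) • u + (β * e) • u) := by abel
    _ = p (α * p d e) (β * p d e) • u := by rw [← mul_addU_smul hp, ← mul_addU_smul hp, hp]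

end InducedAddition

end NearVectorSpace

theorem stmt8_general (F V : Type*) [ScalarGroup F] [AddCommGroup V] [NearVectorSpace F V]
    (u : V) (hu0 : u ≠ 0)
    (p : F → F → F) (hp : ∀ α β : F, α • u + β • u = p α β • u) :
    (0 : V) ∈ QU F V p ∧
    (∀ v ∈ QU F V p, ∀ w ∈ QU F V p, v + w ∈ QU F V p) ∧
    (∀ v ∈ QU F V p, -v ∈ QU F V p) ∧
    (∀ d ∈ dstrU p, ∀ v ∈ QU F V p, d • v ∈ QU F V p) ∧
    (∀ d ∈ dstrU p, ∀ e ∈ dstrU p, ∀ v ∈ QU F V p, d • v + e • v = p d e • v) ∧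
    (∀ d ∈ dstrU p, ∀ e ∈ dstrU p, p d e ∈ dstrU p) :=
  ⟨NearVectorSpace.zero_mem_QU p,
    fun _ hv _ hw => NearVectorSpace.add_mem_QU hv hw,
    fun _ hv => NearVectorSpace.neg_mem_QU hv,
    fun _ hd _ hv => NearVectorSpace.smul_mem_QU hd hv,
    fun d _ e _ _ hv => hv.2 d e,
    fun _ hd _ he => NearVectorSpace.addU_mem_dstrU hp hu0 hd he⟩

/-- `Q_u(V)` is closed under the addition of `V` and under scalar multiplication
by distributive elements of `F_u`, and it forms a left vector space over the
division ring `𝔡_u`: it contains `0`, is closed under negation, scalars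
distribute over vector addition (inherited from `V`), and
`(d +_u e) • v = d • v + e • v` with `d +_u e` again distributive. -/
theorem stmt8 (F V : Type*) [ScalarGroup F] [AddCommGroup V] [NearVectorSpace F V]
    (u : V) (hu : u ∈ quasiKernel F V) (hu0 : u ≠ 0)
    (p : F → F → F) (hp : ∀ α β : F, α • u + β • u = p α β • u) :
    (0 : V) ∈ QU F V p ∧
    (∀ v ∈ QU F V p, ∀ w ∈ QU F V p, v + w ∈ QU F V p) ∧
    (∀ v ∈ QU F V p, -v ∈ QU F V p) ∧
    (∀ d ∈ dstrU p, ∀ v ∈ QU F V p, d • v ∈ QU F V p) ∧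
    (∀ d ∈ dstrU p, ∀ e ∈ dstrU p, ∀ v ∈ QU F V p, d • v + e • v = p d e • v) ∧
    (∀ d ∈ dstrU p, ∀ e ∈ dstrU p, p d e ∈ dstrU p) :=
  stmt8_general F V u hu0 p hp
end

section
/- Let V be a near-vector space over a scalar group F, u a nonzero element of the quasi-kernel, δ a nonzero element of F, and ℬ a basis of the 𝔡_u-vector space Q_u(V). Then δℬ = {δb : b ∈ ℬ} is a basis of Q_{δu}(V) over the division ring 𝔡_{δu}. -/
/-! Writing `+_u` for the addition induced by `u`, the identity
`(α +_{δu} β) δ = αδ +_u βδ` follows from freeness of the action at `u`. Hence `δ • ·` maps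
`Q_u(V)` onto `Q_{δu}(V)`, conjugation `x ↦ δ x δ⁻¹` maps `𝔡_u` onto `𝔡_{δu}`, and
`δ • ∑ c_b b = ∑ (δ c_b δ⁻¹)(δ b)`, so spanning sets and independent sets are transported
(the reverse direction is the same statement for `δ⁻¹`). -/

namespace ScalarGroup

variable {F : Type*} [ScalarGroup F] {δ : F}

theorem inv_ne_zero (hδ : δ ≠ 0) : δ⁻¹ ≠ 0 := by
  intro h
  apply one_ne_zero (F := F)
  rw [← mul_inv_cancel δ hδ, h, mul_zero]

theorem inv_inv (hδ : δ ≠ 0) : δ⁻¹⁻¹ = δ := by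
  calc δ⁻¹⁻¹ = δ * δ⁻¹ * δ⁻¹⁻¹ := by rw [mul_inv_cancel δ hδ, one_mul]
    _ = δ := by rw [mul_assoc, mul_inv_cancel _ (inv_ne_zero hδ), mul_one]

theorem mul_inv_cancel_right (hδ : δ ≠ 0) (x : F) : x * δ * δ⁻¹ = x := by
  rw [mul_assoc, mul_inv_cancel δ hδ, mul_one]

theorem inv_mul_cancel_right_s11 (hδ : δ ≠ 0) (x : F) : x * δ⁻¹ * δ = x := by
  rw [mul_assoc, inv_mul_cancel δ hδ, mul_one]

theorem eq_zero_of_inv_mul_mul_eq_zero (hδ : δ ≠ 0) {x : F} (h : δ⁻¹ * x * δ = 0) : x = 0 := by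
  calc x = δ * (δ⁻¹ * x * δ) * δ⁻¹ := by
        simp only [← mul_assoc]
        rw [mul_inv_cancel_right hδ, mul_inv_cancel δ hδ, one_mul]
    _ = 0 := by rw [h, mul_zero, zero_mul]

end ScalarGroup

namespace NearVectorSpace

variable {F V : Type*} [ScalarGroup F] [AddCommGroup V] [NearVectorSpace F V]

def smulAddMonoidHom (a : F) : V →+ V where
  toFun v := a • v
  map_zero' := smul_zero a
  map_add' := smul_add a

theorem smul_sum {ι : Type*} (a : F) (s : Finset ι) (f : ι → V) :
    a • ∑ i ∈ s, f i = ∑ i ∈ s, a • f i :=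
  map_sum (smulAddMonoidHom a) f s

theorem inv_smul_smul {δ : F} (hδ : δ ≠ 0) (v : V) : δ⁻¹ • δ • v = v := by
  rw [← mul_smul, ScalarGroup.inv_mul_cancel δ hδ, one_smul]

theorem smul_inv_smul {δ : F} (hδ : δ ≠ 0) (v : V) : δ • δ⁻¹ • v = v := by
  rw [← mul_smul, ScalarGroup.mul_inv_cancel δ hδ, one_smul]

theorem smul_injective {δ : F} (hδ : δ ≠ 0) : Function.Injective (fun v : V => δ • v) :=
  Function.LeftInverse.injective (inv_smul_smul hδ)

theorem smul_sum_smul [DecidableEq V] {δ : F} (hδ : δ ≠ 0) (s : Finset V) (c : V → F) :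
    δ • ∑ b ∈ s, c b • b =
      ∑ w ∈ s.image (fun b => δ • b), (δ * c (δ⁻¹ • w) * δ⁻¹) • w := by
  rw [Finset.sum_image fun x _ y _ h => smul_injective hδ h, smul_sum]
  refine Finset.sum_congr rfl fun b _ => ?_
  rw [inv_smul_smul hδ, ← mul_smul, ← mul_smul, ScalarGroup.inv_mul_cancel_right_s11 hδ, mul_smul]

end NearVectorSpace

section Transport

variable {F V : Type*} [ScalarGroup F] [AddCommGroup V] [NearVectorSpace F V]

def InducesAdd (p : F → F → F) (v : V) : Prop :=
  ∀ α β : F, α • v + β • v = p α β • v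

def SpansQU (p : F → F → F) (B : Set V) : Prop :=
  ∀ v ∈ QU F V p, ∃ (s : Finset V) (c : V → F),
    ↑s ⊆ B ∧ (∀ b, c b ∈ dstrU p) ∧ v = ∑ b ∈ s, c b • b

def DstrIndependent (p : F → F → F) (B : Set V) : Prop :=
  ∀ (s : Finset V) (c : V → F), ↑s ⊆ B → (∀ b, c b ∈ dstrU p) →
    ∑ b ∈ s, c b • b = 0 → ∀ b ∈ s, c b = 0

def IsConjAdd (δ : F) (p q : F → F → F) : Prop :=
  ∀ α β : F, q α β * δ = p (α * δ) (β * δ)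

theorem isConjAdd_of_inducesAdd {u : V} (hu0 : u ≠ 0) {δ : F} {p q : F → F → F}
    (hp : InducesAdd p u) (hq : InducesAdd q (δ • u)) : IsConjAdd δ p q := by
  intro α β
  apply NearVectorSpace.free _ _ u hu0
  rw [NearVectorSpace.mul_smul, ← hq, ← hp, NearVectorSpace.mul_smul, NearVectorSpace.mul_smul]

namespace IsConjAdd

variable {δ : F} {p q : F → F → F}

theorem symm (hδ : δ ≠ 0) (h : IsConjAdd δ p q) : IsConjAdd δ⁻¹ q p := by
  intro α β
  have h' := h (α * δ⁻¹) (β * δ⁻¹)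
  rw [ScalarGroup.inv_mul_cancel_right_s11 hδ, ScalarGroup.inv_mul_cancel_right_s11 hδ] at h'
  rw [← h', ScalarGroup.mul_inv_cancel_right hδ]

theorem inducesAdd_smul (h : IsConjAdd δ p q) {v : V} (hv : InducesAdd p v) :
    InducesAdd q (δ • v) := by
  intro α β
  rw [← NearVectorSpace.mul_smul, ← NearVectorSpace.mul_smul, hv, ← h, NearVectorSpace.mul_smul]

theorem smul_mem_QU (h : IsConjAdd δ p q) {v : V} (hv : v ∈ QU F V p) : δ • v ∈ QU F V q :=
  ⟨fun α β => ⟨q α β, h.inducesAdd_smul hv.2 α β⟩, h.inducesAdd_smul hv.2⟩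

theorem conj_mem_dstrU (hδ : δ ≠ 0) (h : IsConjAdd δ p q) {x : F} (hx : x ∈ dstrU p) :
    δ * x * δ⁻¹ ∈ dstrU q := by
  have hq : ∀ α β, q α β = p (α * δ) (β * δ) * δ⁻¹ := fun α β => by
    rw [← h, ScalarGroup.mul_inv_cancel_right hδ]
  intro α β
  have hδx : ∀ γ : F, γ * (δ * x * δ⁻¹) * δ = γ * δ * x := fun γ => by
    rw [← mul_assoc, ScalarGroup.inv_mul_cancel_right_s11 hδ, mul_assoc]
  rw [hq, hq, hδx, hδx, ← hx, ← mul_assoc, ← mul_assoc, mul_assoc _ δ⁻¹ δ,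
    ScalarGroup.inv_mul_cancel δ hδ, mul_one]

end IsConjAdd

variable {δ : F} {p q : F → F → F} {B : Set V}

theorem SpansQU.smul_image (hδ : δ ≠ 0) (hpq : IsConjAdd δ p q) (hB : SpansQU p B) :
    SpansQU q ((fun b => δ • b) '' B) := by
  classical
  intro v hv
  obtain ⟨s, c, hsB, hc, hsum⟩ := hB _ ((hpq.symm hδ).smul_mem_QU hv)
  refine ⟨s.image (fun b => δ • b), fun w => δ * c (δ⁻¹ • w) * δ⁻¹, ?_,
    fun w => hpq.conj_mem_dstrU hδ (hc _), ?_⟩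
  · rw [Finset.coe_image]
    exact Set.image_mono hsB
  · rw [← NearVectorSpace.smul_sum_smul hδ, ← hsum, NearVectorSpace.smul_inv_smul hδ]

theorem DstrIndependent.smul_image (hδ : δ ≠ 0) (hpq : IsConjAdd δ p q)
    (hB : DstrIndependent p B) : DstrIndependent q ((fun b => δ • b) '' B) := by
  classical
  intro s c hs hc hsum w hw
  have hsB : ↑(s.image fun w => δ⁻¹ • w) ⊆ B := by
    rw [Finset.coe_image]
    rintro _ ⟨w, hw, rfl⟩
    obtain ⟨b, hb, rfl⟩ := hs hw
    simpa only [NearVectorSpace.inv_smul_smul hδ] using hb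
  have hc' : ∀ b, δ⁻¹ * c (δ⁻¹⁻¹ • b) * δ⁻¹⁻¹ ∈ dstrU p := fun b =>
    (hpq.symm hδ).conj_mem_dstrU (ScalarGroup.inv_ne_zero hδ) (hc _)
  have hsum' := NearVectorSpace.smul_sum_smul (ScalarGroup.inv_ne_zero hδ) s c
  rw [hsum, NearVectorSpace.smul_zero] at hsum'
  have h0 := hB _ _ hsB hc' hsum'.symm _ (Finset.mem_image_of_mem _ hw)
  rw [ScalarGroup.inv_inv hδ, NearVectorSpace.smul_inv_smul hδ] at h0
  exact ScalarGroup.eq_zero_of_inv_mul_mul_eq_zero hδ h0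

end Transport

theorem stmt11_general (F V : Type*) [ScalarGroup F] [AddCommGroup V] [NearVectorSpace F V]
    (u : V) (hu0 : u ≠ 0)
    (δ : F) (hδ : δ ≠ 0)
    (p q : F → F → F)
    (hp : ∀ α β : F, α • u + β • u = p α β • u)
    (hq : ∀ α β : F, α • (δ • u) + β • (δ • u) = q α β • (δ • u))
    (B : Set V) (hB : B ⊆ QU F V p)
    (hspan : ∀ v ∈ QU F V p, ∃ (s : Finset V) (c : V → F),
      ↑s ⊆ B ∧ (∀ b, c b ∈ dstrU p) ∧ v = ∑ b ∈ s, c b • b)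
    (hindep : ∀ (s : Finset V) (c : V → F), ↑s ⊆ B → (∀ b, c b ∈ dstrU p) →
      ∑ b ∈ s, c b • b = 0 → ∀ b ∈ s, c b = 0) :
    ((fun b => δ • b) '' B ⊆ QU F V q) ∧
    (∀ v ∈ QU F V q, ∃ (s : Finset V) (c : V → F),
      ↑s ⊆ (fun b => δ • b) '' B ∧ (∀ b, c b ∈ dstrU q) ∧ v = ∑ b ∈ s, c b • b) ∧
    (∀ (s : Finset V) (c : V → F), ↑s ⊆ (fun b => δ • b) '' B → (∀ b, c b ∈ dstrU q) →
      ∑ b ∈ s, c b • b = 0 → ∀ b ∈ s, c b = 0) := by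
  have hpq : IsConjAdd δ p q := isConjAdd_of_inducesAdd hu0 hp hq
  refine ⟨?_, SpansQU.smul_image hδ hpq hspan, DstrIndependent.smul_image hδ hpq hindep⟩
  rintro _ ⟨b, hb, rfl⟩
  exact hpq.smul_mem_QU (hB hb)

/-- If `ℬ` is a basis of the `𝔡_u`-vector space `Q_u(V)` then
`δℬ = {δb : b ∈ ℬ}` is a basis of `Q_{δu}(V)` over the division ring `𝔡_{δu}`. -/
theorem stmt11 (F V : Type*) [ScalarGroup F] [AddCommGroup V] [NearVectorSpace F V]
    (u : V) (hu : u ∈ quasiKernel F V) (hu0 : u ≠ 0)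
    (δ : F) (hδ : δ ≠ 0)
    (p q : F → F → F)
    (hp : ∀ α β : F, α • u + β • u = p α β • u)
    (hq : ∀ α β : F, α • (δ • u) + β • (δ • u) = q α β • (δ • u))
    (B : Set V) (hB : B ⊆ QU F V p)
    (hspan : ∀ v ∈ QU F V p, ∃ (s : Finset V) (c : V → F),
      ↑s ⊆ B ∧ (∀ b, c b ∈ dstrU p) ∧ v = ∑ b ∈ s, c b • b)
    (hindep : ∀ (s : Finset V) (c : V → F), ↑s ⊆ B → (∀ b, c b ∈ dstrU p) →
      ∑ b ∈ s, c b • b = 0 → ∀ b ∈ s, c b = 0) :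
    ((fun b => δ • b) '' B ⊆ QU F V q) ∧
    (∀ v ∈ QU F V q, ∃ (s : Finset V) (c : V → F),
      ↑s ⊆ (fun b => δ • b) '' B ∧ (∀ b, c b ∈ dstrU q) ∧ v = ∑ b ∈ s, c b • b) ∧
    (∀ (s : Finset V) (c : V → F), ↑s ⊆ (fun b => δ • b) '' B → (∀ b, c b ∈ dstrU q) →
      ∑ b ∈ s, c b • b = 0 → ∀ b ∈ s, c b = 0) :=
  stmt11_general F V u hu0 δ hδ p q hp hq B hB hspan hindep
end

section
/- Let F be a near-field, I a nonempty index set, and F^(I) the canonical near-vector space of finitely supported tuples. For any δ ∈ F* and any tuple k = (k_i)_{i∈I} with all k_i in the distributive elements 𝔡 of F and k ≠ 0, the additions induced on F by δu and by δk coincide: +_{δk} = +_δ (where the addition induced by a nonzero quasi-kernel element w is defined by αw + βw = (α +_w β)w). -/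
/-- Scalar multiplication on the canonical near-vector space `F^(I)` of finitely
supported tuples over a near-field `F`. -/
noncomputable def nfSmul {F I : Type*} [LeftNearField F] (a : F) (f : I →₀ F) : I →₀ F :=
  Finsupp.mapRange (fun x => a * x) (LeftNearField.mul_zero a) f

/-!
Evaluate the defining identity of `+_{δk}` at a coordinate `i` with `k i ≠ 0`. Since `k i` is
distributive it factors out on the right of `αδ + βδ`, and right cancellation of `k i` and then
of `δ` (valid because nonzero elements are invertible) identifies the two sums.
-/

namespace LeftNearField

variable {F : Type*} [LeftNearField F]

theorem mul_right_cancel₀ {a b c : F} (hc : c ≠ 0) (h : a * c = b * c) : a = b := by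
  simpa only [mul_assoc, mul_inv_cancel c hc, mul_one] using congrArg (· * c⁻¹) h

theorem add_mul_mul_of_mem_dstr {γ : F} (hγ : γ ∈ dstr F) (α β δ : F) :
    α * (δ * γ) + β * (δ * γ) = (α * δ + β * δ) * γ := by
  rw [hγ, mul_assoc, mul_assoc]

end LeftNearField

@[simp]
theorem nfSmul_apply {F I : Type*} [LeftNearField F] (a : F) (f : I →₀ F) (i : I) :
    nfSmul a f i = a * f i :=
  Finsupp.mapRange_apply ..

theorem stmt13_general (F I : Type*) [LeftNearField F]
    (δ : F) (hδ : δ ≠ 0) (k : I →₀ F) (hk : ∀ i, k i ∈ dstr F) (hk0 : k ≠ 0)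
    (p q : F → F → F)
    (hp : ∀ α β : F,
      nfSmul α (nfSmul δ k) + nfSmul β (nfSmul δ k) = nfSmul (p α β) (nfSmul δ k))
    (hq : ∀ α β : F, α * δ + β * δ = q α β * δ) :
    p = q := by
  obtain ⟨i, hi⟩ : ∃ i, k i ≠ 0 := by
    simpa only [Finsupp.ne_iff, Finsupp.coe_zero, Pi.zero_apply] using hk0
  funext α β
  have hpi : α * (δ * k i) + β * (δ * k i) = p α β * (δ * k i) := by
    simpa only [Finsupp.add_apply, nfSmul_apply] using congrArg (· i) (hp α β)
  rw [LeftNearField.add_mul_mul_of_mem_dstr (hk i), hq, ← mul_assoc] at hpi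
  exact (LeftNearField.mul_right_cancel₀ hδ (LeftNearField.mul_right_cancel₀ hi hpi)).symm

/-- In `F^(I)`, for `δ ∈ F*` and a nonzero tuple `k` with all entries in `𝔡`,
the addition `+_{δk}` induced on `F` by the quasi-kernel element `δk`
(characterised by `α•(δk) + β•(δk) = (α +_{δk} β)•(δk)`) coincides with the
addition `+_δ` induced by `δ` on `F` itself (characterised by
`αδ + βδ = (α +_δ β)δ`). -/
theorem stmt13 (F I : Type*) [LeftNearField F] [Nonempty I]
    (δ : F) (hδ : δ ≠ 0) (k : I →₀ F) (hk : ∀ i, k i ∈ dstr F) (hk0 : k ≠ 0)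
    (p q : F → F → F)
    (hp : ∀ α β : F,
      nfSmul α (nfSmul δ k) + nfSmul β (nfSmul δ k) = nfSmul (p α β) (nfSmul δ k))
    (hq : ∀ α β : F, α * δ + β * δ = q α β * δ) :
    p = q :=
  stmt13_general F I δ hδ k hk hk0 p q hp hq
end

section
/- Let V be a nontrivial near-vector space over a scalar group F. If there exists a scalar basis ℬ ⊆ Q(V)\{0} of V over F such that +_{b₁} = +_{b₂} for all b₁, b₂ ∈ ℬ, then V is F-isomorphic to the canonical near-vector space F_u^(ℬ) for u ∈ ℬ, via the map sending Σ_{b∈ℬ} λ_b b to (λ_b)_{b∈ℬ}. -/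
/-! The map `combination B : (B →₀ F) → V`, `f ↦ ∑ f_b b`, is onto because `B` spans. Since `F`
carries no subtraction, injectivity needs an extra idea: each `b ∈ B` has a scalar `m_b` with
`m_b b = -b` (expand `-b` in the basis and read off the `b`-coordinate of `b + (-b) = 0`), so
`f_b b - g_b b = (f_b +_u g_b m_b) b` and independence turns `∑ f_b b = ∑ g_b b` into `f = g`.
As `combination` turns coordinatewise `+_u` into `+` and coordinatewise left multiplication into
the action, its inverse is the required `F`-isomorphism. -/

instance NearVectorSpace.toDistribMulAction {F V : Type*} [ScalarGroup F] [AddCommGroup V]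
    [NearVectorSpace F V] : DistribMulAction F V where
  one_smul := NearVectorSpace.one_smul
  mul_smul := NearVectorSpace.mul_smul
  smul_zero a := by
    have h := NearVectorSpace.smul_add a (0 : V) 0
    rw [add_zero] at h
    exact left_eq_add.mp h
  smul_add := NearVectorSpace.smul_add

section ScalarBasis

variable {F V : Type*} [ScalarGroup F] [AddCommGroup V] [NearVectorSpace F V]

def combination (B : Set V) (f : B →₀ F) : V :=
  f.sum fun b a => a • (b : V)

lemma combination_eq_sum {B : Set V} (f : B →₀ F) {t : Finset B} (ht : f.support ⊆ t) :
    combination B f = ∑ b ∈ t, f b • (b : V) :=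
  f.sum_of_support_subset ht _ fun _ _ => NearVectorSpace.zero_smul _

lemma combination_single {B : Set V} (b : B) (a : F) :
    combination B (Finsupp.single b a) = a • (b : V) :=
  Finsupp.sum_single_index (NearVectorSpace.zero_smul _)

lemma combination_mapRange_mul {B : Set V} (α : F) (f : B →₀ F) :
    combination B (f.mapRange (α * ·) (ScalarGroup.mul_zero α)) = α • combination B f := by
  rw [combination, combination, Finsupp.sum_mapRange_index fun _ => NearVectorSpace.zero_smul _,
    Finsupp.smul_sum (c := α)]
  simp only [NearVectorSpace.mul_smul]

lemma combination_zipWith {B : Set V} {p : F → F → F}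
    (hp : ∀ b ∈ B, ∀ α β : F, α • b + β • b = p α β • b) (h00 : p 0 0 = 0) (f g : B →₀ F) :
    combination B (Finsupp.zipWith p h00 f g) = combination B f + combination B g := by
  classical
  rw [combination_eq_sum _ Finsupp.support_zipWith, combination_eq_sum f Finset.subset_union_left,
    combination_eq_sum g Finset.subset_union_right, ← Finset.sum_add_distrib]
  exact Finset.sum_congr rfl fun b _ => by rw [Finsupp.zipWith_apply, hp b b.2]

lemma induced_add_zero_zero {B : Set V} (hB0 : (0 : V) ∉ B) {p : F → F → F}
    (hp : ∀ b ∈ B, ∀ α β : F, α • b + β • b = p α β • b) {b : V} (hb : b ∈ B) : p 0 0 = 0 := by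
  have h := hp b hb 0 0
  rw [NearVectorSpace.zero_smul, add_zero] at h
  exact (NearVectorSpace.free _ _ b (ne_of_mem_of_not_mem hb hB0)
    ((NearVectorSpace.zero_smul (F := F) b).trans h)).symm

lemma coeff_eq_zero_of_sum_smul_eq_zero {B : Set V}
    (hindep : ∀ (s : Finset V) (c : V → F), ↑s ⊆ B →
      ∑ b ∈ s, c b • b = 0 → ∀ b ∈ s, c b = 0)
    {t : Finset B} {c : B → F} (h : ∑ b ∈ t, c b • (b : V) = 0) {b : B} (hb : b ∈ t) :
    c b = 0 := by
  classical
  have hts : ↑(t.map (Function.Embedding.subtype _)) ⊆ B := by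
    intro x hx
    obtain ⟨y, -, rfl⟩ := Finset.mem_map.mp hx
    exact y.2
  have := hindep _ (fun x => if hx : x ∈ B then c ⟨x, hx⟩ else 0) hts
    (by simpa [Finset.sum_map] using h) b (Finset.mem_map_of_mem _ hb)
  simpa using this

lemma exists_combination_eq {B : Set V}
    (hspan : ∀ v : V, ∃ (s : Finset V) (c : V → F), ↑s ⊆ B ∧ v = ∑ b ∈ s, c b • b) (v : V) :
    ∃ f : B →₀ F, combination B f = v := by
  classical
  obtain ⟨s, c, hsB, rfl⟩ := hspan v
  refine ⟨Finsupp.indicator (s.subtype (· ∈ B)) fun b _ => c b, ?_⟩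
  rw [combination, Finsupp.sum_indicator_index _ fun _ _ => NearVectorSpace.zero_smul _,
    Finset.sum_subtype_of_mem (fun x => c x • x) hsB]

lemma exists_smul_eq_neg {B : Set V} {p : F → F → F}
    (hp : ∀ b ∈ B, ∀ α β : F, α • b + β • b = p α β • b)
    (hspan : ∀ v : V, ∃ (s : Finset V) (c : V → F), ↑s ⊆ B ∧ v = ∑ b ∈ s, c b • b)
    (hindep : ∀ (s : Finset V) (c : V → F), ↑s ⊆ B →
      ∑ b ∈ s, c b • b = 0 → ∀ b ∈ s, c b = 0)
    {b : V} (hb : b ∈ B) : ∃ m : F, m • b = -b := by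
  classical
  obtain ⟨f, hf⟩ := exists_combination_eq hspan (-b)
  set b' : B := ⟨b, hb⟩
  set t := insert b' f.support
  have hb't : b' ∈ t := Finset.mem_insert_self _ _
  have hsum : ∑ x ∈ t, Function.update f b' (p 1 (f b')) x • (x : V) = 0 := by
    rw [← Finset.add_sum_erase t _ hb't, Function.update_self, ← hp b hb,
      NearVectorSpace.one_smul, add_assoc,
      Finset.sum_congr rfl fun x hx => by rw [Function.update_of_ne (Finset.ne_of_mem_erase hx)],
      Finset.add_sum_erase t (fun x => f x • (x : V)) hb't,
      ← combination_eq_sum f (Finset.subset_insert _ _), hf, add_neg_cancel]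
  have h1 : p 1 (f b') = 0 := by
    simpa using coeff_eq_zero_of_sum_smul_eq_zero hindep hsum hb't
  refine ⟨f b', (neg_eq_of_add_eq_zero_right ?_).symm⟩
  calc b + f b' • b = (1 : F) • b + f b' • b := by rw [NearVectorSpace.one_smul]
    _ = 0 := by rw [hp b hb, h1, NearVectorSpace.zero_smul]

lemma combination_injective {B : Set V} (hB0 : (0 : V) ∉ B) {p : F → F → F}
    (hp : ∀ b ∈ B, ∀ α β : F, α • b + β • b = p α β • b)
    (hspan : ∀ v : V, ∃ (s : Finset V) (c : V → F), ↑s ⊆ B ∧ v = ∑ b ∈ s, c b • b)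
    (hindep : ∀ (s : Finset V) (c : V → F), ↑s ⊆ B →
      ∑ b ∈ s, c b • b = 0 → ∀ b ∈ s, c b = 0) :
    Function.Injective (combination (F := F) B) := by
  classical
  intro f g hfg
  choose m hm using fun b : B => exists_smul_eq_neg hp hspan hindep b.2
  have hsub : ∀ (a c : F) (b : B), p a (c * m b) • (b : V) = a • (b : V) - c • (b : V) := by
    intro a c b
    rw [← hp b b.2, NearVectorSpace.mul_smul, hm, smul_neg, sub_eq_add_neg]
  set t := f.support ∪ g.support
  have hsum : ∑ x ∈ t, p (f x) (g x * m x) • (x : V) = 0 := by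
    rw [Finset.sum_congr rfl fun x _ => hsub (f x) (g x) x, Finset.sum_sub_distrib,
      ← combination_eq_sum f Finset.subset_union_left,
      ← combination_eq_sum g Finset.subset_union_right, hfg, sub_self]
  ext b
  by_cases hb : b ∈ t
  · have h0 := coeff_eq_zero_of_sum_smul_eq_zero hindep hsum hb
    refine NearVectorSpace.free _ _ _ (ne_of_mem_of_not_mem b.2 hB0) (sub_eq_zero.mp ?_)
    rw [← hsub, h0, NearVectorSpace.zero_smul]
  · rw [Finset.mem_union, Finsupp.mem_support_iff, Finsupp.mem_support_iff, not_or,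
      not_not, not_not] at hb
    rw [hb.1, hb.2]

end ScalarBasis

theorem stmt17_general (F V : Type*) [ScalarGroup F] [AddCommGroup V] [NearVectorSpace F V]
    (B : Set V) (hB0 : (0 : V) ∉ B)
    (p : F → F → F) (hp : ∀ b ∈ B, ∀ α β : F, α • b + β • b = p α β • b)
    (hspan : ∀ v : V, ∃ (s : Finset V) (c : V → F), ↑s ⊆ B ∧ v = ∑ b ∈ s, c b • b)
    (hindep : ∀ (s : Finset V) (c : V → F), ↑s ⊆ B →
      ∑ b ∈ s, c b • b = 0 → ∀ b ∈ s, c b = 0) :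
    ∃ φ : V → (B →₀ F), Function.Bijective φ ∧
      (∀ (v w : V) (b : B), φ (v + w) b = p (φ v b) (φ w b)) ∧
      (∀ (α : F) (v : V) (b : B), φ (α • v) b = α * φ v b) ∧
      (∀ b : B, φ (b : V) = Finsupp.single b 1) := by
  obtain ⟨e, he⟩ : ∃ e : (B →₀ F) ≃ V, ⇑e = combination B :=
    ⟨.ofBijective _ ⟨combination_injective hB0 hp hspan hindep, exists_combination_eq hspan⟩, rfl⟩
  refine ⟨e.symm, e.symm.bijective, fun v w b => ?_, fun α v b => ?_, fun b => ?_⟩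
  · have h00 := induced_add_zero_zero hB0 hp b.2
    have : e.symm (v + w) = Finsupp.zipWith p h00 (e.symm v) (e.symm w) := by
      rw [e.symm_apply_eq, he, combination_zipWith hp, ← he, e.apply_symm_apply, e.apply_symm_apply]
    rw [this, Finsupp.zipWith_apply]
  · have : e.symm (α • v) = (e.symm v).mapRange (α * ·) (ScalarGroup.mul_zero α) := by
      rw [e.symm_apply_eq, he, combination_mapRange_mul, ← he, e.apply_symm_apply]
    rw [this, Finsupp.mapRange_apply]
  · rw [e.symm_apply_eq, he, combination_single, NearVectorSpace.one_smul]

/-- If a nontrivial near-vector space `V` has a scalar basis `ℬ ⊆ Q(V) \ {0}`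
all of whose elements induce the same addition `p = +_u` (`u ∈ ℬ`), then `V` is
`F`-isomorphic to the canonical near-vector space `F_u^(ℬ)` via the map sending
`Σ_{b∈ℬ} λ_b b` to `(λ_b)_{b∈ℬ}` (equivalently, the additive, `F`-equivariant
bijection sending each `b ∈ ℬ` to the corresponding standard basis tuple). -/
theorem stmt17 (F V : Type*) [ScalarGroup F] [AddCommGroup V] [NearVectorSpace F V]
    (hV : ∃ v : V, v ≠ 0)
    (B : Set V) (hBQ : B ⊆ quasiKernel F V) (hB0 : (0 : V) ∉ B)
    (p : F → F → F) (hp : ∀ b ∈ B, ∀ α β : F, α • b + β • b = p α β • b)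
    (hspan : ∀ v : V, ∃ (s : Finset V) (c : V → F), ↑s ⊆ B ∧ v = ∑ b ∈ s, c b • b)
    (hindep : ∀ (s : Finset V) (c : V → F), ↑s ⊆ B →
      ∑ b ∈ s, c b • b = 0 → ∀ b ∈ s, c b = 0) :
    ∃ φ : V → (B →₀ F), Function.Bijective φ ∧
      (∀ (v w : V) (b : B), φ (v + w) b = p (φ v b) (φ w b)) ∧
      (∀ (α : F) (v : V) (b : B), φ (α • v) b = α * φ v b) ∧
      (∀ b : B, φ (b : V) = Finsupp.single b 1) :=
  stmt17_general F V B hB0 p hp hspan hindep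
end
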